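/- arXiv:2208.13069 — 2 statements merged into one kernel-verified Lean document; each statement's English description precedes it below -/
import Mathlib

section
/- Let G be a countable group and let V be a finite-dimensional vector space over a finite field (so V is a finite set). Let σ_s : V^G → V^G be a linear NUCA with finite memory. Then: (i) σ_s is stably injective if and only if there exists a linear NUCA τ : V^G → V^G with finite memory such that τ ∘ σ_s = id (σ_s is left-invertible); (ii) σ_s is stably post-surjective if and only if there exists a linear NUCA τ : V^G → V^G with finite memory such that σ_s ∘ τ = id (σ_s is right-invertible). -/
open scoped BigOperators Pointwise

/-- The linear NUCA `σ_s : V^G → V^G` with memory `M ⊆ G` associated with the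
configuration of local defining maps `s`, given in coefficient form:
`σ_s(x)(g) = ∑_{m ∈ M} s(g,m)(x(g·m))`. -/
def nucaMap {k V G : Type*} [Field k] [AddCommGroup V] [Module k V] [Group G]
    (M : Finset G) (s : G → G → (V →ₗ[k] V)) (x : G → V) : G → V :=
  fun g => ∑ m ∈ M, s g m (x (g * m))

/-- Two configurations are asymptotic if they agree outside a finite set. -/
def Asymptotic {G A : Type*} (x y : G → A) : Prop :=
  Set.Finite {g : G | x g ≠ y g}

/-- A map `σ : V^G → V^G` is pre-injective if `σ(x) = σ(y)` implies `x = y` whenever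
`x` and `y` are asymptotic. -/
def PreInjective {G V : Type*} (σ : (G → V) → (G → V)) : Prop :=
  ∀ x y : G → V, Asymptotic x y → σ x = σ y → x = y

/-- A map `σ : V^G → V^G` is post-surjective if for all `x, y` with `y` asymptotic to
`σ(x)` there is `z` asymptotic to `x` with `σ(z) = y`. -/
def PostSurjective {G V : Type*} (σ : (G → V) → (G → V)) : Prop :=
  ∀ x y : G → V, Asymptotic y (σ x) → ∃ z : G → V, Asymptotic z x ∧ σ z = y

/-- The dual configuration `s*` of local defining maps, in coefficient form:
`s*(g,m) = (s(g·m, m⁻¹))ᵀ`, the transpose (dual map) of `s(g·m, m⁻¹)`. -/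
def dualCoeff {k V G : Type*} [Field k] [AddCommGroup V] [Module k V] [Group G]
    (s : G → G → (V →ₗ[k] V)) :
    G → G → (Module.Dual k V →ₗ[k] Module.Dual k V) :=
  fun g m => (s (g * m) m⁻¹).dualMap

/-- `Σ(s)`: the closure, in the prodiscrete topology (local maps discrete),
of the shift orbit `{g·s : g ∈ G}` of the configuration of local defining maps `s`,
where `(g·s)(h) = s(g⁻¹h)`. -/
def orbitClosure {G E : Type*} [Group G] (s : G → G → E) : Set (G → G → E) :=
  @closure _ (@Pi.topologicalSpace G (fun _ => G → E) (fun _ => ⊥))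
    (Set.range fun g : G => fun h : G => s (g⁻¹ * h))


section Helpers
variable {k V G : Type*} [Field k] [AddCommGroup V] [Module k V] [Group G]

variable {k V G : Type*} [Field k] [AddCommGroup V] [Module k V] [Group G]

def nucaHom (M : Finset G) (s : G → G → (V →ₗ[k] V)) : (G → V) →ₗ[k] (G → V) where
  toFun := nucaMap M s
  map_add' x y := by funext g; simp [nucaMap, Finset.sum_add_distrib]
  map_smul' c x := by funext g; simp [nucaMap, Finset.smul_sum]

@[simp] lemma nucaHom_apply (M : Finset G) (s : G → G → (V →ₗ[k] V)) (x : G → V) :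
    nucaHom M s x = nucaMap M s x := rfl

lemma nucaMap_zero (M : Finset G) (s : G → G → (V →ₗ[k] V)) :
    nucaMap M s (0 : G → V) = 0 := map_zero (nucaHom M s)

lemma nucaMap_sub (M : Finset G) (s : G → G → (V →ₗ[k] V)) (x y : G → V) :
    nucaMap M s (x - y) = nucaMap M s x - nucaMap M s y := map_sub (nucaHom M s) x y

lemma nucaMap_add (M : Finset G) (s : G → G → (V →ₗ[k] V)) (x y : G → V) :
    nucaMap M s (x + y) = nucaMap M s x + nucaMap M s y := map_add (nucaHom M s) x y

lemma mem_orbitClosure_iff {E : Type*} {s p : G → G → E} :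
    p ∈ orbitClosure s ↔ ∀ F : Finset G, ∃ g : G, ∀ h ∈ F, p h = s (g⁻¹ * h) := by
  letI : TopologicalSpace (G → E) := ⊥
  haveI : DiscreteTopology (G → E) := ⟨rfl⟩
  constructor
  · intro hp F
    rw [orbitClosure, mem_closure_iff] at hp
    obtain ⟨q, hq1, g, hg⟩ := hp ((F : Set G).pi (fun h => {p h}))
      (isOpen_set_pi F.finite_toSet (fun a _ => isOpen_discrete _))
      (fun h _ => rfl)
    refine ⟨g, fun h hh => ?_⟩
    have := hq1 h hh
    simp only [Set.mem_singleton_iff] at this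
    rw [← hg] at this
    exact this.symm
  · intro H
    rw [orbitClosure, mem_closure_iff]
    intro O hO hpO
    obtain ⟨I, u, hIu, hsub⟩ := isOpen_pi_iff.1 hO p hpO
    obtain ⟨g, hg⟩ := H I
    refine ⟨fun h => s (g⁻¹ * h), hsub fun i hi => ?_, ⟨g, rfl⟩⟩
    rw [← hg i hi]
    exact (hIu i hi).2

lemma shift_mem_orbitClosure {E : Type*} (s : G → G → E) (g : G) :
    (fun h => s (g * h)) ∈ orbitClosure s :=
  mem_orbitClosure_iff.2 fun F => ⟨g⁻¹, fun h _ => by rw [inv_inv]⟩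

lemma self_mem_orbitClosure {E : Type*} (s : G → G → E) : s ∈ orbitClosure s := by
  have := shift_mem_orbitClosure s 1
  simpa using this

lemma orbitClosure_support {E : Type*} [Zero E] {s p : G → G → E} {M : Finset G}
    (hs : ∀ g, ∀ m ∉ M, s g m = 0) (hp : p ∈ orbitClosure s) :
    ∀ g, ∀ m ∉ M, p g m = 0 := by
  intro g m hm
  obtain ⟨h, hh⟩ := mem_orbitClosure_iff.1 hp {g}
  rw [hh g (Finset.mem_singleton_self g)]
  exact hs _ m hm

end Helpers


lemma ultra_limit {α : Type*} [Finite α] (U : Ultrafilter ℕ) (f : ℕ → α) :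
    ∃ a, ∀ᶠ n in (U : Filter ℕ), f n = a := by
  obtain ⟨a, -, ha⟩ := Ultrafilter.eq_pure_of_finite_mem
    (f := U.map f) (Set.finite_univ (α := α)) Filter.univ_mem
  refine ⟨a, ?_⟩
  have : {a} ∈ (U.map f : Filter α) := by rw [ha]; exact Filter.mem_pure.2 rfl
  simpa [Filter.mem_map, Set.preimage, Filter.Eventually] using this

example {V : Type*} [Finite V] [AddCommGroup V] : True := trivial

lemma finite_linmaps {k V : Type*} [Field k] [AddCommGroup V] [Module k V] [Finite V] :
    Finite (V →ₗ[k] V) :=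
  Finite.of_injective (fun f => (f : V → V)) (DFunLike.coe_injective)

lemma finite_rows {G E : Type*} [Finite E] [Zero E] (M : Finset G) :
    Finite {f : G → E // ∀ m ∉ M, f m = 0} := by
  classical
  apply Finite.of_injective (fun f => (fun m : ↥M => f.1 m))
  intro f g hfg
  ext m
  by_cases hm : m ∈ M
  · exact congrFun hfg ⟨m, hm⟩
  · rw [f.2 m hm, g.2 m hm]

section Window
variable {k V G : Type*} [Field k] [AddCommGroup V] [Module k V] [Group G]
variable [Finite V] [Countable G]

lemma injW {M : Finset G} {s : G → G → (V →ₗ[k] V)} (hs : ∀ g, ∀ m ∉ M, s g m = 0)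
    (H : ∀ p ∈ orbitClosure s, Function.Injective (nucaMap M p)) :
    ∃ W : Finset G, ∀ p ∈ orbitClosure s, ∀ x : G → V,
      (∀ w ∈ W, nucaMap M p x w = 0) → x 1 = 0 := by
  classical
  by_contra hcon
  push_neg at hcon
  obtain ⟨e, he⟩ := exists_surjective_nat G
  set W : ℕ → Finset G := fun n => (Finset.range n).image e with hW
  have hcon' : ∀ n : ℕ, ∃ p ∈ orbitClosure s, ∃ x : G → V,
      (∀ w ∈ W n, nucaMap M p x w = 0) ∧ x 1 ≠ 0 := fun n => hcon (W n)
  choose p hp x hx hx1 using hcon'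
  set U : Ultrafilter ℕ := Filter.hyperfilter ℕ with hU
  -- limit of rows
  haveI : Finite (V →ₗ[k] V) := finite_linmaps
  haveI : Finite {f : G → (V →ₗ[k] V) // ∀ m ∉ M, f m = 0} := finite_rows M
  have hrows : ∀ n g, ∀ m ∉ M, p n g m = 0 := fun n => orbitClosure_support hs (hp n)
  have hPlim : ∀ g : G, ∃ r : {f : G → (V →ₗ[k] V) // ∀ m ∉ M, f m = 0},
      ∀ᶠ n in (U : Filter ℕ), p n g = r.1 := by
    intro g
    obtain ⟨r, hr⟩ := ultra_limit U (fun n => (⟨p n g, hrows n g⟩ :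
      {f : G → (V →ₗ[k] V) // ∀ m ∉ M, f m = 0}))
    exact ⟨r, hr.mono fun n hn => congrArg Subtype.val hn⟩
  choose P hP using hPlim
  have hXlim : ∀ g : G, ∃ v : V, ∀ᶠ n in (U : Filter ℕ), x n g = v := fun g =>
    ultra_limit U (fun n => x n g)
  choose X hX' using hXlim
  set Q : G → G → (V →ₗ[k] V) := fun g => (P g).1 with hQ
  -- Q ∈ orbitClosure s
  have hQmem : Q ∈ orbitClosure s := by
    rw [mem_orbitClosure_iff]
    intro F
    have hev : ∀ᶠ n in (U : Filter ℕ), ∀ h ∈ (F : Set G), p n h = Q h :=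
      (Filter.eventually_all_finite F.finite_toSet).2 fun h _ => hP h
    obtain ⟨n, hn⟩ := hev.exists
    obtain ⟨g, hg⟩ := mem_orbitClosure_iff.1 (hp n) F
    exact ⟨g, fun h hh => by rw [← hn h hh, hg h hh]⟩
  -- σ_Q X = 0
  have hker : ∀ g : G, nucaMap M Q X g = 0 := by
    intro g
    obtain ⟨kk, hkk⟩ := he g
    have hC3 : ∀ᶠ n in (U : Filter ℕ), g ∈ W n := by
      apply Filter.Eventually.filter_mono (Filter.hyperfilter_le_cofinite)
      have : ∀ n, kk < n → g ∈ W n := by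
        intro n hn
        exact Finset.mem_image.2 ⟨kk, Finset.mem_range.2 hn, hkk⟩
      exact Filter.eventually_cofinite.2 <| Set.Finite.subset (Set.finite_le_nat kk)
        (fun n hn => le_of_not_gt fun h => hn (this n h))
    have hC1 : ∀ᶠ n in (U : Filter ℕ), ∀ m ∈ (M : Set G), x n (g * m) = X (g * m) :=
      (Filter.eventually_all_finite M.finite_toSet).2 fun m _ => hX' (g * m)
    have hC2 : ∀ᶠ n in (U : Filter ℕ), p n g = Q g := hP g
    obtain ⟨n, hn1, hn2, hn3⟩ := (hC1.and (hC2.and hC3)).exists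
    have : nucaMap M Q X g = nucaMap M (p n) (x n) g := by
      unfold nucaMap
      apply Finset.sum_congr rfl
      intro m hm
      rw [hn2, hn1 m hm]
    rw [this]
    exact hx n g hn3
  have hX1 : X 1 ≠ 0 := by
    obtain ⟨n, hn⟩ := (hX' 1).exists
    rw [← hn]; exact hx1 n
  apply hX1
  have : X = 0 := H Q hQmem (by
    rw [nucaMap_zero]
    exact funext hker)
  rw [this]; rfl

end Window
section PSW
variable {k V G : Type*} [Field k] [AddCommGroup V] [Module k V] [Group G]

def delta1 (G : Type*) [Group G] {V : Type*} [Zero V] [DecidableEq G] (v : V) : G → V :=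
  fun a => if a = 1 then v else 0

variable [Finite V] [Countable G]

lemma postsurjW {M : Finset G} {s : G → G → (V →ₗ[k] V)} (hs : ∀ g, ∀ m ∉ M, s g m = 0)
    (H : ∀ p ∈ orbitClosure s, PostSurjective (nucaMap M p)) [DecidableEq G] :
    ∃ E : Finset G, ∀ p ∈ orbitClosure s, ∀ v : V, ∃ z : G → V,
      (∀ a ∉ E, z a = 0) ∧ nucaMap M p z = delta1 G v := by
  by_contra hcon
  push_neg at hcon
  obtain ⟨e, he⟩ := exists_surjective_nat G
  set W : ℕ → Finset G := fun n => (Finset.range n).image e with hW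
  have hcon' : ∀ n : ℕ, ∃ p ∈ orbitClosure s, ∃ v : V, ∀ z : G → V,
      (∀ a ∉ W n, z a = 0) → nucaMap M p z ≠ delta1 G v := fun n => hcon (W n)
  choose p hp v bad using hcon'
  set U : Ultrafilter ℕ := Filter.hyperfilter ℕ with hU
  haveI : Finite (V →ₗ[k] V) := finite_linmaps
  haveI : Finite {f : G → (V →ₗ[k] V) // ∀ m ∉ M, f m = 0} := finite_rows M
  have hrows : ∀ n g, ∀ m ∉ M, p n g m = 0 := fun n => orbitClosure_support hs (hp n)
  have hPlim : ∀ g : G, ∃ r : {f : G → (V →ₗ[k] V) // ∀ m ∉ M, f m = 0},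
      ∀ᶠ n in (U : Filter ℕ), p n g = r.1 := by
    intro g
    obtain ⟨r, hr⟩ := ultra_limit U (fun n => (⟨p n g, hrows n g⟩ :
      {f : G → (V →ₗ[k] V) // ∀ m ∉ M, f m = 0}))
    exact ⟨r, hr.mono fun n hn => congrArg Subtype.val hn⟩
  choose P hP using hPlim
  set Q : G → G → (V →ₗ[k] V) := fun g => (P g).1 with hQ
  have hQmem : Q ∈ orbitClosure s := by
    rw [mem_orbitClosure_iff]
    intro F
    have hev : ∀ᶠ n in (U : Filter ℕ), ∀ h ∈ (F : Set G), p n h = Q h :=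
      (Filter.eventually_all_finite F.finite_toSet).2 fun h _ => hP h
    obtain ⟨n, hn⟩ := hev.exists
    obtain ⟨g, hg⟩ := mem_orbitClosure_iff.1 (hp n) F
    exact ⟨g, fun h hh => by rw [← hn h hh, hg h hh]⟩
  obtain ⟨vv, hvv⟩ := ultra_limit U v
  -- each v n ≠ 0
  have hvne : ∀ n, v n ≠ 0 := by
    intro n h0
    apply bad n 0 (fun a _ => rfl)
    funext a
    rw [nucaMap_zero, h0]
    simp [delta1]
  -- apply post-surjectivity of Q
  have hasym : Asymptotic (delta1 G vv) (nucaMap M Q 0) := by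
    rw [nucaMap_zero]
    apply Set.Finite.subset (Set.finite_singleton (1 : G))
    intro a ha
    simp only [Set.mem_setOf_eq, delta1] at ha
    by_contra h1
    simp only [Set.mem_singleton_iff] at h1
    rw [if_neg h1] at ha
    exact ha rfl
  obtain ⟨z, hzasym, hz⟩ := H Q hQmem 0 (delta1 G vv) hasym
  have hzfin : Set.Finite {g : G | z g ≠ 0} := by
    have := hzasym
    unfold Asymptotic at this
    simpa using this
  set D : Finset G := hzfin.toFinset with hD
  have hzD : ∀ a ∉ D, z a = 0 := by
    intro a ha
    by_contra h
    exact ha (hzfin.mem_toFinset.2 h)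
  set F : Finset G := D * M⁻¹ ∪ {1} with hF
  have hevA : ∀ᶠ n in (U : Filter ℕ), v n = vv := hvv
  have hevB : ∀ᶠ n in (U : Filter ℕ), ∀ c ∈ (F : Set G), p n c = Q c :=
    (Filter.eventually_all_finite F.finite_toSet).2 fun c _ => hP c
  have hevC : ∀ᶠ n in (U : Filter ℕ), ∀ d ∈ (D : Set G), d ∈ W n := by
    refine (Filter.eventually_all_finite D.finite_toSet).2 fun d _ => ?_
    obtain ⟨kk, hkk⟩ := he d
    apply Filter.Eventually.filter_mono (Filter.hyperfilter_le_cofinite)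
    have hmem : ∀ n, kk < n → d ∈ W n := fun n hn =>
      Finset.mem_image.2 ⟨kk, Finset.mem_range.2 hn, hkk⟩
    exact Filter.eventually_cofinite.2 <| Set.Finite.subset (Set.finite_le_nat kk)
      (fun n hn => le_of_not_gt fun h => hn (hmem n h))
  obtain ⟨n, hnA, hnB, hnC⟩ := (hevA.and (hevB.and hevC)).exists
  apply bad n z
  · intro a ha
    apply hzD
    intro hAD
    exact ha (hnC a (Finset.mem_coe.2 hAD))
  · funext c
    by_cases hc : c ∈ F
    · have : nucaMap M (p n) z c = nucaMap M Q z c := by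
        unfold nucaMap
        exact Finset.sum_congr rfl fun m hm => by rw [hnB c (Finset.mem_coe.2 hc)]
      rw [this, hz, hnA]
    · have hc1 : c ≠ 1 := by
        intro h; exact hc (by rw [h, hF]; exact Finset.mem_union_right _ (Finset.mem_singleton_self 1))
      have : nucaMap M (p n) z c = 0 := by
        unfold nucaMap
        apply Finset.sum_eq_zero
        intro m hm
        have hzc : z (c * m) = 0 := by
          apply hzD
          intro hmem
          apply hc
          rw [hF]
          apply Finset.mem_union_left
          exact Finset.mem_mul.2 ⟨c * m, hmem, m⁻¹, Finset.inv_mem_inv hm, by group⟩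
        rw [hzc, map_zero]
      rw [this]
      simp [delta1, hc1]
end PSW

section LA

variable {k V G : Type*} [Field k] [AddCommGroup V] [Module k V]

def extendZero [DecidableEq G] (S : Finset G) : ((↥S → V)) →ₗ[k] (G → V) where
  toFun u := fun a => if h : a ∈ S then u ⟨a, h⟩ else 0
  map_add' u v := by funext a; by_cases h : a ∈ S <;> simp [h]
  map_smul' c u := by funext a; by_cases h : a ∈ S <;> simp [h]

@[simp] lemma extendZero_mem [DecidableEq G] (S : Finset G) (u : ↥S → V) {a : G} (h : a ∈ S) :
    extendZero (k := k) S u a = u ⟨a, h⟩ := dif_pos h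

@[simp] lemma extendZero_not_mem [DecidableEq G] (S : Finset G) (u : ↥S → V) {a : G} (h : a ∉ S) :
    extendZero (k := k) S u a = 0 := dif_neg h

lemma linear_factor {A B C : Type*} [AddCommGroup A] [Module k A] [AddCommGroup B] [Module k B]
    [AddCommGroup C] [Module k C] (L : A →ₗ[k] B) (e : A →ₗ[k] C)
    (h : ∀ a, L a = 0 → e a = 0) : ∃ Φ : B →ₗ[k] C, ∀ a, Φ (L a) = e a := by
  have hker : LinearMap.ker L ≤ LinearMap.ker e := fun a ha => h a ha
  set ebar := Submodule.liftQ (LinearMap.ker L) e hker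
  set qL := LinearMap.quotKerEquivRange L
  obtain ⟨q, hq⟩ := Submodule.exists_isCompl (LinearMap.range L)
  set proj := Submodule.linearProjOfIsCompl _ q hq
  refine ⟨ebar ∘ₗ (qL.symm : LinearMap.range L →ₗ[k] _) ∘ₗ proj, fun a => ?_⟩
  have h1 : proj (L a) = ⟨L a, ⟨a, rfl⟩⟩ :=
    Submodule.linearProjOfIsCompl_apply_left hq ⟨L a, ⟨a, rfl⟩⟩
  have h2 : qL.symm ⟨L a, ⟨a, rfl⟩⟩ = Submodule.Quotient.mk a := by
    rw [LinearEquiv.symm_apply_eq]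
    exact Subtype.ext (LinearMap.quotKerEquivRange_apply_mk L a).symm
  simp only [LinearMap.comp_apply, h1, LinearEquiv.coe_coe, h2]
  exact Submodule.liftQ_apply _ e a
end LA
section Dir
variable {k V G : Type*} [Field k] [AddCommGroup V] [Module k V] [Group G]

lemma leftinv_stably_injective {M : Finset G} {s : G → G → (V →ₗ[k] V)}
    {N : Finset G} {t : G → G → (V →ₗ[k] V)}
    (hid : ∀ x : G → V, nucaMap N t (nucaMap M s x) = x) :
    ∀ p ∈ orbitClosure s, Function.Injective (nucaMap M p) := by
  classical
  intro p hp x x' hxx'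
  have hd : nucaMap M p (x - x') = 0 := by
    rw [nucaMap_sub, hxx', sub_self]
  set d : G → V := x - x' with hdd
  suffices hzero : d = 0 by
    have := sub_eq_zero.1 hzero
    exact this
  funext g₀
  obtain ⟨g, hg⟩ := mem_orbitClosure_iff.1 hp (N.image (g₀ * ·))
  set z : G → V := fun b => d (g * b) with hz
  have key := congrFun (hid z) (g⁻¹ * g₀)
  have hz1 : z (g⁻¹ * g₀) = d g₀ := by simp [hz, mul_assoc]
  have hterm : ∀ n ∈ N, nucaMap M s z (g⁻¹ * g₀ * n) = 0 := by
    intro n hn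
    have hrow : p (g₀ * n) = s (g⁻¹ * (g₀ * n)) :=
      hg (g₀ * n) (Finset.mem_image.2 ⟨n, hn, rfl⟩)
    have : nucaMap M s z (g⁻¹ * g₀ * n) = nucaMap M p d (g₀ * n) := by
      unfold nucaMap
      apply Finset.sum_congr rfl
      intro m hm
      have e1 : s (g⁻¹ * g₀ * n) m = p (g₀ * n) m := by
        rw [hrow, mul_assoc]
      have e2 : z (g⁻¹ * g₀ * n * m) = d (g₀ * n * m) := by
        simp [hz]; group
      rw [e1, e2]
    rw [this, hd]
    rfl
  rw [hz1] at key
  rw [← key]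
  have hrfl : nucaMap N t (nucaMap M s z) (g⁻¹ * g₀) =
      ∑ n ∈ N, t (g⁻¹ * g₀) n (nucaMap M s z (g⁻¹ * g₀ * n)) := rfl
  rw [hrfl]
  apply Finset.sum_eq_zero
  intro n hn
  rw [hterm n hn, map_zero]

end Dir
section Dir2
variable {k V G : Type*} [Field k] [AddCommGroup V] [Module k V] [Group G]

lemma rightinv_stably_postsurj {M : Finset G} {s : G → G → (V →ₗ[k] V)}
    {N : Finset G} {t : G → G → (V →ₗ[k] V)}
    (hid : ∀ x : G → V, nucaMap M s (nucaMap N t x) = x) :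
    ∀ p ∈ orbitClosure s, PostSurjective (nucaMap M p) := by
  classical
  rcases subsingleton_or_nontrivial V with hV | hV
  · intro p _ x y _
    exact ⟨x, by simp [Asymptotic], funext fun a => Subsingleton.elim _ _⟩
  -- get m*n = 1 with m ∈ M, n ∈ N
  obtain ⟨v0, hv0⟩ := exists_ne (0 : V)
  have h1 : ∃ m ∈ M, ∃ n ∈ N, m * n = 1 := by
    have key := congrFun (hid (fun a => if a = 1 then v0 else 0)) 1
    set y : G → V := fun a => if a = 1 then v0 else 0 with hy
    have : nucaMap M s (nucaMap N t y) 1 = v0 := by rw [key]; simp [hy]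
    have hne : (∑ m ∈ M, s 1 m (nucaMap N t y (1 * m))) ≠ 0 := by
      rw [show (∑ m ∈ M, s 1 m (nucaMap N t y (1 * m))) = nucaMap M s (nucaMap N t y) 1 from rfl,
        this]
      exact hv0
    obtain ⟨m, hm, hmne⟩ := Finset.exists_ne_zero_of_sum_ne_zero hne
    have hXm : nucaMap N t y (1 * m) ≠ 0 := fun h => hmne (by rw [h, map_zero])
    have : (∑ n ∈ N, t (1 * m) n (y (1 * m * n))) ≠ 0 := hXm
    obtain ⟨n, hn, hnne⟩ := Finset.exists_ne_zero_of_sum_ne_zero this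
    have hyne : y (1 * m * n) ≠ 0 := fun h => hnne (by rw [h, map_zero])
    have : 1 * m * n = 1 := by
      by_contra hcon
      rw [hy] at hyne; simp only [if_neg hcon] at hyne; exact hyne rfl
    exact ⟨m, hm, n, hn, by simpa using this⟩
  obtain ⟨m1, hm1, n1, hn1, hmn1⟩ := h1
  intro p hp x y hasym
  set d : G → V := fun a => y a - nucaMap M p x a with hd
  have hdfin : Set.Finite {a : G | d a ≠ 0} := by
    apply hasym.subset
    intro a ha
    simp only [Set.mem_setOf_eq, hd] at ha ⊢
    exact fun h => ha (by rw [h, sub_self])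
  set D : Finset G := hdfin.toFinset with hD
  have hdD : ∀ a ∉ D, d a = 0 := fun a ha => by
    by_contra h; exact ha (hdfin.mem_toFinset.2 h)
  set K : Finset G := D * N⁻¹ with hK
  set F : Finset G := K * M⁻¹ with hF
  obtain ⟨g, hg⟩ := mem_orbitClosure_iff.1 hp F
  set w : G → V := fun a => ∑ n ∈ N, t (g⁻¹ * a) n (d (a * n)) with hw
  have hwsupp : ∀ a ∉ K, w a = 0 := by
    intro a ha
    apply Finset.sum_eq_zero
    intro n hn
    have : a * n ∉ D := by
      intro hmem
      exact ha (Finset.mem_mul.2 ⟨a * n, hmem, n⁻¹, Finset.inv_mem_inv hn, by group⟩)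
    rw [hdD _ this, map_zero]
  have hDF : (D : Set G) ⊆ F := by
    intro a ha
    have haK : a * n1⁻¹ ∈ K :=
      Finset.mem_mul.2 ⟨a, Finset.mem_coe.1 ha, n1⁻¹, Finset.inv_mem_inv hn1, rfl⟩
    have : a * n1⁻¹ * m1⁻¹ = a := by
      have hh : m1 = n1⁻¹ := by rw [eq_inv_iff_mul_eq_one]; exact hmn1
      rw [hh]; group
    exact Finset.mem_coe.2 (by
      rw [← this]
      exact Finset.mem_mul.2 ⟨a * n1⁻¹, haK, m1⁻¹, Finset.inv_mem_inv hm1, rfl⟩)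
  have hsw : nucaMap M p w = d := by
    funext c
    by_cases hc : c ∈ F
    · -- rows agree and use hid
      have key := congrFun (hid (fun b => d (g * b))) (g⁻¹ * c)
      have hlhs : nucaMap M s (nucaMap N t (fun b => d (g * b))) (g⁻¹ * c)
          = nucaMap M p w c := by
        show (∑ m ∈ M, s (g⁻¹ * c) m (nucaMap N t (fun b => d (g * b)) (g⁻¹ * c * m)))
          = ∑ m ∈ M, p c m (w (c * m))
        apply Finset.sum_congr rfl
        intro m hm
        have e1 : s (g⁻¹ * c) m = p c m := by rw [hg c hc]
        have e2 : nucaMap N t (fun b => d (g * b)) (g⁻¹ * c * m) = w (c * m) := by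
          show (∑ n ∈ N, t (g⁻¹ * c * m) n (d (g * (g⁻¹ * c * m * n))))
            = ∑ n ∈ N, t (g⁻¹ * (c * m)) n (d (c * m * n))
          apply Finset.sum_congr rfl
          intro n hn
          have e3 : g⁻¹ * c * m = g⁻¹ * (c * m) := by group
          rw [e3]
          have e4 : g * (g⁻¹ * (c * m) * n) = c * m * n := by group
          rw [e4]
        rw [e1, e2]
      rw [← hlhs, key]
      congr 1
      group
    · -- both sides zero
      have hdc : d c = 0 := by
        apply hdD
        intro hcD
        exact hc (hDF (Finset.mem_coe.2 hcD))
      rw [hdc]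
      apply Finset.sum_eq_zero
      intro m hm
      have : c * m ∉ K := by
        intro hmem
        exact hc (Finset.mem_mul.2 ⟨c * m, hmem, m⁻¹, Finset.inv_mem_inv hm, by group⟩)
      rw [hwsupp _ this, map_zero]
  refine ⟨x + w, ?_, ?_⟩
  · apply Set.Finite.subset (Set.Finite.ofFinset K (fun a => Iff.rfl))
    intro a ha
    simp only [Set.mem_setOf_eq, Pi.add_apply] at ha
    by_contra haK
    rw [hwsupp a (by exact fun h => haK (Finset.mem_coe.2 h))] at ha
    simp at ha
  · rw [nucaMap_add, hsw]
    funext a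
    simp [hd]
end Dir2
section Dir3
variable {k V G : Type*} [Field k] [AddCommGroup V] [Module k V] [Group G]
variable [Finite V] [Countable G]

lemma stably_injective_left_inverse {M : Finset G} {s : G → G → (V →ₗ[k] V)}
    (hs : ∀ g, ∀ m ∉ M, s g m = 0)
    (H : ∀ p ∈ orbitClosure s, Function.Injective (nucaMap M p)) :
    ∃ (N : Finset G) (t : G → G → (V →ₗ[k] V)),
      ∀ x : G → V, nucaMap N t (nucaMap M s x) = x := by
  classical
  obtain ⟨W, hW⟩ := injW hs H
  set WM1 : Finset G := W * M ∪ {1} with hWM1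
  have h1mem : (1 : G) ∈ WM1 := Finset.mem_union_right _ (Finset.mem_singleton_self 1)
  have hWMsub : ∀ w ∈ W, ∀ m ∈ M, w * m ∈ WM1 := fun w hw m hm =>
    Finset.mem_union_left _ (Finset.mem_mul.2 ⟨w, hw, m, hm, rfl⟩)
  set Lmap : (G → G → (V →ₗ[k] V)) → ((↥WM1 → V) →ₗ[k] (↥W → V)) := fun p =>
    (LinearMap.funLeft k V (fun w : ↥W => (w : G))) ∘ₗ (nucaHom M p) ∘ₗ extendZero WM1
    with hLmap
  have hsel : ∀ g : G, ∃ Φ : (↥W → V) →ₗ[k] V,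
      ∀ u : ↥WM1 → V, Φ (Lmap (fun h => s (g * h)) u) = u ⟨1, h1mem⟩ := by
    intro g
    have hker0 : ∀ u : ↥WM1 → V, Lmap (fun h => s (g * h)) u = 0 →
        (LinearMap.proj (⟨1, h1mem⟩ : ↥WM1) : (↥WM1 → V) →ₗ[k] V) u = 0 := by
      intro u hu
      have hmem := shift_mem_orbitClosure s g
      have hker : ∀ w ∈ W, nucaMap M (fun h => s (g * h)) (extendZero WM1 u) w = 0 :=
        fun w hw => congrFun hu ⟨w, hw⟩
      have := hW _ hmem (extendZero WM1 u) hker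
      rw [extendZero_mem WM1 u h1mem] at this
      exact this
    obtain ⟨Φ, hΦ⟩ := linear_factor _ _ hker0
    exact ⟨Φ, fun u => hΦ u⟩
  choose Φ hΦ using hsel
  set tdef : G → G → (V →ₗ[k] V) := fun g a => if h : a ∈ W then
    (Φ g) ∘ₗ (LinearMap.single k (fun _ : ↥W => V) ⟨a, h⟩) else 0 with htdef
  refine ⟨W, tdef, fun x => ?_⟩
  funext g
  set z : G → V := fun b => x (g * b) with hz
  set u : ↥WM1 → V := fun i => z (i : G) with hu
  set Y : G → V := nucaMap M s x with hY
  have key2 : Lmap (fun h => s (g * h)) u = fun w : ↥W => Y (g * (w : G)) := by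
    funext w
    show (∑ m ∈ M, s (g * (w : G)) m (extendZero WM1 u ((w : G) * m)))
      = ∑ m ∈ M, s (g * (w : G)) m (x (g * (w : G) * m))
    apply Finset.sum_congr rfl
    intro m hm
    rw [extendZero_mem WM1 u (hWMsub w w.2 m hm)]
    show s (g * (w : G)) m (x (g * ((w : G) * m))) = _
    rw [mul_assoc]
  have key1 : x g = Φ g (fun w : ↥W => Y (g * (w : G))) := by
    rw [← key2, hΦ g u]
    show x g = z 1
    simp [hz]
  have step1 : nucaMap W tdef Y g = ∑ a ∈ W.attach, tdef g (a : G) (Y (g * (a : G))) := by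
    rw [Finset.sum_attach W (fun a => tdef g a (Y (g * a)))]
    rfl
  have step2 : ∀ a : ↥W, tdef g (a : G) (Y (g * (a : G))) =
      Φ g (Pi.single a (Y (g * (a : G)))) := by
    intro a
    show (if h : (a : G) ∈ W then
      (Φ g) ∘ₗ (LinearMap.single k (fun _ : ↥W => V) ⟨(a : G), h⟩) else 0) (Y (g * (a : G)))
      = _
    rw [dif_pos a.2]
    rfl
  have key3 : nucaMap W tdef Y g = Φ g (fun w : ↥W => Y (g * (w : G))) := by
    rw [step1, Finset.sum_congr rfl (fun a _ => step2 a), ← map_sum]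
    congr 1
    rw [Finset.attach_eq_univ]
    exact Finset.univ_sum_single (fun w : ↥W => Y (g * (w : G)))
  rw [key3, ← key1]
end Dir3
section Dir4
variable {k V G : Type*} [Field k] [AddCommGroup V] [Module k V] [Group G]
variable [Finite V] [Countable G]

lemma stably_postsurj_right_inverse [Nontrivial V] {M : Finset G}
    {s : G → G → (V →ₗ[k] V)} (hs : ∀ g, ∀ m ∉ M, s g m = 0)
    (H : ∀ p ∈ orbitClosure s, PostSurjective (nucaMap M p)) :
    ∃ (N : Finset G) (t : G → G → (V →ₗ[k] V)),
      ∀ x : G → V, nucaMap M s (nucaMap N t x) = x := by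
  classical
  obtain ⟨E, hE⟩ := postsurjW hs H
  obtain ⟨v0, hv0⟩ := exists_ne (0 : V)
  obtain ⟨z0, hz0supp, hz0⟩ := hE s (self_mem_orbitClosure s) v0
  have hm0 : ∃ m0, m0 ∈ M ∧ m0 ∈ E := by
    have h1 : nucaMap M s z0 1 = v0 := by rw [hz0]; simp [delta1]
    have hne : (∑ m ∈ M, s 1 m (z0 (1 * m))) ≠ 0 := by
      rw [show (∑ m ∈ M, s 1 m (z0 (1 * m))) = nucaMap M s z0 1 from rfl, h1]
      exact hv0
    obtain ⟨m, hm, hmne⟩ := Finset.exists_ne_zero_of_sum_ne_zero hne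
    have hz0ne : z0 (1 * m) ≠ 0 := fun h => hmne (by rw [h, map_zero])
    have hmE : (1 : G) * m ∈ E := by
      by_contra hc; exact hz0ne (hz0supp _ hc)
    exact ⟨m, hm, by simpa using hmE⟩
  obtain ⟨m0, hm0M, hm0E⟩ := hm0
  set N : Finset G := E⁻¹ with hN
  -- linear selection of solutions
  have hsel : ∀ g : G, ∃ Z : V →ₗ[k] (↥E → V),
      ∀ v : V, nucaMap M (fun h => s (g * h)) (extendZero (k := k) E (Z v)) = delta1 G v := by
    intro g
    set A : (↥E → V) →ₗ[k] (G → V) :=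
      (nucaHom M (fun h => s (g * h))) ∘ₗ extendZero (k := k) E with hA
    set Dl : V →ₗ[k] (G → V) := LinearMap.single k (fun _ : G => V) 1 with hDl
    set C : (V × (↥E → V)) →ₗ[k] (G → V) :=
      A ∘ₗ (LinearMap.snd k V (↥E → V)) - Dl ∘ₗ (LinearMap.fst k V (↥E → V)) with hC
    have hdelta : ∀ v : V, Dl v = delta1 G v := by
      intro v; funext a
      have h0 : Dl v a = (Pi.single (1 : G) v : G → V) a := rfl
      rw [h0, Pi.single_apply]
      rfl
    have hπ : LinearMap.range
        ((LinearMap.fst k V (↥E → V)) ∘ₗ (LinearMap.ker C).subtype) = ⊤ := by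
      rw [LinearMap.range_eq_top]
      intro v
      obtain ⟨z, hzsupp, hz⟩ := hE (fun h => s (g * h)) (shift_mem_orbitClosure s g) v
      have hzext : extendZero (k := k) E (fun i : ↥E => z (i : G)) = z := by
        funext a
        by_cases h : a ∈ E
        · rw [extendZero_mem _ _ h]
        · rw [extendZero_not_mem _ _ h, hzsupp a h]
      have hker : (v, fun i : ↥E => z (i : G)) ∈ LinearMap.ker C := by
        rw [LinearMap.mem_ker]
        show A (fun i : ↥E => z (i : G)) - Dl v = 0
        rw [sub_eq_zero, hdelta]
        show nucaMap M (fun h => s (g * h)) (extendZero (k := k) E (fun i : ↥E => z (i : G))) = _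
        rw [hzext, hz]
      exact ⟨⟨(v, fun i : ↥E => z (i : G)), hker⟩, rfl⟩
    obtain ⟨S, hS⟩ := LinearMap.exists_rightInverse_of_surjective _ hπ
    refine ⟨(LinearMap.snd k V (↥E → V)) ∘ₗ (LinearMap.ker C).subtype ∘ₗ S, fun v => ?_⟩
    have hv1 : ((S v : V × (↥E → V))).1 = v := LinearMap.ext_iff.1 hS v
    have hker := LinearMap.mem_ker.1 (S v).2
    have hCv : A ((S v : V × (↥E → V))).2 = Dl ((S v : V × (↥E → V))).1 := by
      have : A ((S v : V × (↥E → V))).2 - Dl ((S v : V × (↥E → V))).1 = 0 := hker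
      rwa [sub_eq_zero] at this
    rw [hv1, hdelta] at hCv
    exact hCv
  choose Z hZ using hsel
  set tdef : G → G → (V →ₗ[k] V) := fun a n => if h : n⁻¹ ∈ E then
    (LinearMap.proj (⟨n⁻¹, h⟩ : ↥E)) ∘ₗ (Z (a * n)) else 0 with htdef
  refine ⟨N, tdef, fun y => ?_⟩
  funext c
  set ζ : G → (G → V) := fun g => extendZero (k := k) E (Z g (y g)) with hζ
  set Xg : G → G → V := fun g a => ζ g (g⁻¹ * a) with hXg
  have f2 : ∀ g : G, nucaMap M s (Xg g) c = if g = c then y g else 0 := by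
    intro g
    have hf1 := congrFun (hZ g (y g)) (g⁻¹ * c)
    have e0 : ∀ m : G, g * (g⁻¹ * c) = c := fun _ => by group
    have lhs_eq : nucaMap M (fun h => s (g * h)) (extendZero (k := k) E (Z g (y g))) (g⁻¹ * c)
        = nucaMap M s (Xg g) c := by
      show (∑ m ∈ M, s (g * (g⁻¹ * c)) m (ζ g ((g⁻¹ * c) * m)))
        = ∑ m ∈ M, s c m (ζ g (g⁻¹ * (c * m)))
      apply Finset.sum_congr rfl
      intro m hm
      have e1 : g * (g⁻¹ * c) = c := by group
      have e2 : (g⁻¹ * c) * m = g⁻¹ * (c * m) := by group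
      rw [e1, e2]
    rw [lhs_eq] at hf1
    rw [hf1]
    show (if g⁻¹ * c = 1 then y g else 0) = _
    by_cases hgc : g = c
    · rw [if_pos (by rw [hgc]; group), if_pos hgc]
    · rw [if_neg (fun h => hgc (by
        have := inv_mul_eq_one.1 h
        exact this)), if_neg hgc]
  have stepA : ∀ a : G, nucaMap N tdef y a = ∑ n ∈ N, Xg (a * n) a := by
    intro a
    apply Finset.sum_congr rfl
    intro n hn
    show (if h : n⁻¹ ∈ E then
      (LinearMap.proj (⟨n⁻¹, h⟩ : ↥E) : (↥E → V) →ₗ[k] V) ∘ₗ (Z (a * n)) else 0) (y (a * n))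
      = ζ (a * n) ((a * n)⁻¹ * a)
    have e1 : (a * n)⁻¹ * a = n⁻¹ := by group
    rw [e1]
    by_cases h : n⁻¹ ∈ E
    · rw [dif_pos h]
      show (Z (a * n) (y (a * n))) ⟨n⁻¹, h⟩ = extendZero (k := k) E (Z (a * n) (y (a * n))) n⁻¹
      rw [extendZero_mem _ _ h]
    · rw [dif_neg h]
      show (0 : V) = extendZero (k := k) E (Z (a * n) (y (a * n))) n⁻¹
      rw [extendZero_not_mem _ _ h]
  set T : Finset G := Finset.image (fun q : G × G => c * q.1 * q.2) (M ×ˢ N) with hT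
  have stepB : ∀ m ∈ M, (∑ n ∈ N, Xg ((c * m) * n) (c * m)) = ∑ g' ∈ T, Xg g' (c * m) := by
    intro m hm
    rw [← Finset.sum_image (f := fun g' => Xg g' (c * m))
      (g := fun n => (c * m) * n) (s := N) (fun a _ b _ h => mul_left_cancel h)]
    apply Finset.sum_subset
    · intro g' hg'
      obtain ⟨n, hn, rfl⟩ := Finset.mem_image.1 hg'
      exact Finset.mem_image.2 ⟨(m, n), Finset.mem_product.2 ⟨hm, hn⟩, by group⟩
    · intro g' hg'T hg'Im
      show ζ g' (g'⁻¹ * (c * m)) = 0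
      by_cases hmem : g'⁻¹ * (c * m) ∈ E
      · exfalso
        apply hg'Im
        refine Finset.mem_image.2 ⟨(g'⁻¹ * (c * m))⁻¹, ?_, by group⟩
        rw [hN, Finset.mem_inv']
        simpa using hmem
      · exact extendZero_not_mem _ _ hmem
  have main : nucaMap M s (nucaMap N tdef y) c = ∑ g' ∈ T, nucaMap M s (Xg g') c := by
    show (∑ m ∈ M, s c m (nucaMap N tdef y (c * m))) = _
    have e1 : ∀ m ∈ M, s c m (nucaMap N tdef y (c * m))
        = ∑ g' ∈ T, s c m (Xg g' (c * m)) := by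
      intro m hm
      rw [stepA (c * m), stepB m hm, map_sum]
    rw [Finset.sum_congr rfl e1, Finset.sum_comm]
    rfl
  rw [main, Finset.sum_congr rfl (fun g' _ => f2 g')]
  rw [Finset.sum_ite_eq' T c (fun g' => y g')]
  rw [if_pos]
  exact Finset.mem_image.2 ⟨(m0, m0⁻¹),
    Finset.mem_product.2 ⟨hm0M, by rw [hN, Finset.mem_inv']; simpa using hm0E⟩, by group⟩
end Dir4

/-- Over a finite vector space alphabet, a linear NUCA with finite memory is
stably injective iff it is left-invertible (by a linear NUCA with finite memory),
and stably post-surjective iff it is right-invertible (by a linear NUCA with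
finite memory). -/
theorem stmt16 {k V G : Type*} [Field k] [Finite k] [AddCommGroup V] [Module k V]
    [FiniteDimensional k V] [Group G] [Countable G]
    (M : Finset G) (s : G → G → (V →ₗ[k] V)) (hs : ∀ g, ∀ m ∉ M, s g m = 0) :
    ((∀ p ∈ orbitClosure s, Function.Injective (nucaMap M p)) ↔
      ∃ (N : Finset G) (t : G → G → (V →ₗ[k] V)),
        ∀ x : G → V, nucaMap N t (nucaMap M s x) = x) ∧
    ((∀ p ∈ orbitClosure s, PostSurjective (nucaMap M p)) ↔
      ∃ (N : Finset G) (t : G → G → (V →ₗ[k] V)),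
        ∀ x : G → V, nucaMap M s (nucaMap N t x) = x) := by
  classical
  haveI : Finite V := Module.finite_of_finite k
  rcases subsingleton_or_nontrivial V with hV | hV
  · refine ⟨⟨fun _ => ⟨∅, 0, fun x => funext fun g => Subsingleton.elim _ _⟩,
      fun ⟨N, t, hid⟩ => leftinv_stably_injective hid⟩,
      ⟨fun _ => ⟨∅, 0, fun x => funext fun g => Subsingleton.elim _ _⟩,
      fun _ => ?_⟩⟩
    intro p _ x y _
    exact ⟨x, by simp [Asymptotic], funext fun a => Subsingleton.elim _ _⟩
  · exact ⟨⟨fun H => stably_injective_left_inverse hs H,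
      fun ⟨N, t, h⟩ => leftinv_stably_injective h⟩,
      ⟨fun H => stably_postsurj_right_inverse hs H,
      fun ⟨N, t, h⟩ => rightinv_stably_postsurj h⟩⟩
end

section
/- Let A = ℤ/2ℤ viewed as a vector space over the field with two elements, let G = ℤ, and let M = {-1, 0} ⊆ ℤ. Define s : ℤ → L(A^M, A) by s(n)(u,v) = v for n ≤ 0 and s(n)(u,v) = u + v for n ≥ 1, where (u,v) denotes (coordinate at -1, coordinate at 0); thus σ_s(x)(n) = x(n) for n ≤ 0 and σ_s(x)(n) = x(n-1) + x(n) for n ≥ 1. Then: (a) σ_s : A^ℤ → A^ℤ is bijective but not post-surjective; (b) the dual linear NUCA σ_{s*} : (A*)^ℤ → (A*)^ℤ is pre-injective and post-surjective but not injective. -/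
open scoped BigOperators Pointwise

/-- The linear NUCA over the universe `ℤ` (written additively) with memory
`M ⊆ ℤ` and configuration of local defining maps `s` in coefficient form:
`σ_s(x)(n) = ∑_{m ∈ M} s(n,m)(x(n+m))`. -/
def nucaMapZ {V : Type*} [AddCommGroup V] [Module (ZMod 2) V]
    (M : Finset ℤ) (s : ℤ → ℤ → (V →ₗ[ZMod 2] V)) (x : ℤ → V) : ℤ → V :=
  fun g => ∑ m ∈ M, s g m (x (g + m))

/-- The dual configuration `s*` in coefficient form (additive universe `ℤ`):
`s*(g,m) = (s(g+m, -m))ᵀ`, the transpose (dual map) of `s(g+m, -m)`. -/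
def dualCoeffZ {V : Type*} [AddCommGroup V] [Module (ZMod 2) V]
    (s : ℤ → ℤ → (V →ₗ[ZMod 2] V)) :
    ℤ → ℤ → (Module.Dual (ZMod 2) V →ₗ[ZMod 2] Module.Dual (ZMod 2) V) :=
  fun g m => (s (g + m) (-m)).dualMap

/-- The configuration of local defining maps with `s(n)(u,v) = v` for `n ≤ 0` and
`s(n)(u,v) = u + v` for `n ≥ 1`, where `(u,v)` = (coordinate at `-1`, coordinate
at `0`); i.e. the coefficient `s(n,m)` is the identity exactly when `m = 0`, or
when `n ≥ 1` and `m = -1`. -/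
def sEx : ℤ → ℤ → (ZMod 2 →ₗ[ZMod 2] ZMod 2) :=
  fun n m =>
    if n ≤ 0 then (if m = 0 then LinearMap.id else 0)
    else (if m = 0 ∨ m = -1 then LinearMap.id else 0)

/-!
`σ` is the identity on `ℤ≤0` and the discrete derivative `x (n - 1) + x n` on `ℤ>0`, so it is
inverted by the running sum `y ↦ (n ↦ ∑_{0 ≤ k ≤ n} y k)` (for `n ≥ 0`). The preimage of `δ₁` is
therefore the indicator of `[1, ∞)`, which is not finitely supported: `σ` is not post-surjective.

The dual map is `τ ω n = ω n + ω (n + 1)` for `n ≥ 0` (and `ω n` for `n < 0`), so its kernel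
consists of the configurations vanishing on `ℤ<0` and constant on `ℤ≥0`. The only finitely
supported one is `0`, whence pre-injectivity, while a nonzero constant shows `τ` is not injective.
A finitely supported `d` vanishing from `N` on has the finitely supported preimage given by the
tail sums `n ↦ ∑_{n ≤ k < N} d k` on `ℤ≥0`, which gives post-surjectivity.
-/

open Filter

section Asymptotic

variable {G V : Type*}

theorem asymptotic_iff_eventuallyEq {x y : G → V} : Asymptotic x y ↔ x =ᶠ[cofinite] y :=
  Iff.rfl

theorem asymptotic_iff_sub [AddCommGroup V] {x y : G → V} :
    Asymptotic x y ↔ Asymptotic (x - y) 0 := by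
  simp only [Asymptotic, Pi.sub_apply, Pi.zero_apply, sub_ne_zero]

theorem Asymptotic.eventually_atTop [Zero V] {x : ℤ → V} (h : Asymptotic x 0) :
    ∀ᶠ n in atTop, x n = 0 :=
  (asymptotic_iff_eventuallyEq.1 h).filter_mono atTop_le_cofinite

variable [AddCommGroup V]

theorem preInjective_iff (f : (G → V) →+ (G → V)) :
    PreInjective f ↔ ∀ x, Asymptotic x 0 → f x = 0 → x = 0 := by
  refine ⟨fun hf x hx hfx => hf x 0 hx (by rw [hfx, map_zero]), fun hf x y hxy hfxy => ?_⟩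
  rw [← sub_eq_zero]
  exact hf _ (asymptotic_iff_sub.1 hxy) (by rw [map_sub, hfxy, sub_self])

theorem postSurjective_iff (f : (G → V) →+ (G → V)) :
    PostSurjective f ↔ ∀ y, Asymptotic y 0 → ∃ z, Asymptotic z 0 ∧ f z = y := by
  refine ⟨fun hf y hy => hf 0 y (by rwa [map_zero]), fun hf x y hy => ?_⟩
  obtain ⟨e, he, hfe⟩ := hf (y - f x) (asymptotic_iff_sub.1 hy)
  refine ⟨x + e, asymptotic_iff_sub.2 (by rwa [add_sub_cancel_left]), ?_⟩
  rw [map_add, hfe, add_sub_cancel]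

end Asymptotic

section NUCA

variable {V : Type*} [AddCommGroup V] [Module (ZMod 2) V]

def nucaAddMonoidHom (M : Finset ℤ) (s : ℤ → ℤ → (V →ₗ[ZMod 2] V)) : (ℤ → V) →+ (ℤ → V) :=
  AddMonoidHom.mk' (nucaMapZ M s) fun x y => by
    funext g
    simp only [nucaMapZ, Pi.add_apply, map_add, Finset.sum_add_distrib]

theorem coe_nucaAddMonoidHom (M : Finset ℤ) (s : ℤ → ℤ → (V →ₗ[ZMod 2] V)) :
    ⇑(nucaAddMonoidHom M s) = nucaMapZ M s :=
  rfl

end NUCA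

section RunningSum

variable {V : Type*} [AddCommMonoid V] (y : ℤ → V)

noncomputable def runningSum (n : ℤ) : V :=
  if n < 0 then y n else ∑ k ∈ Finset.Icc 0 n, y k

theorem runningSum_of_nonpos {n : ℤ} (hn : n ≤ 0) : runningSum y n = y n := by
  rcases hn.lt_or_eq with hn | rfl
  · simp [runningSum, hn]
  · simp [runningSum]

theorem runningSum_add_one {n : ℤ} (hn : 0 ≤ n) :
    runningSum y (n + 1) = runningSum y n + y (n + 1) := by
  rw [runningSum, runningSum, if_neg (by omega), if_neg (by omega),
    ← Finset.insert_Icc_right_eq_Icc_add_one (by omega),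
    Finset.sum_insert (by simp), add_comm]

end RunningSum

local notation "σ" => nucaMapZ ({-1, 0} : Finset ℤ) sEx

local notation "τ" => nucaMapZ (-({-1, 0} : Finset ℤ)) (dualCoeffZ sEx)

theorem nucaMapZ_sEx_apply (x : ℤ → ZMod 2) (n : ℤ) :
    σ x n = if n ≤ 0 then x n else x (n - 1) + x n := by
  rw [nucaMapZ, Finset.sum_insert (by decide), Finset.sum_singleton]
  by_cases h : n ≤ 0 <;> simp [sEx, h, sub_eq_add_neg]

theorem nucaMapZ_dualCoeffZ_sEx_apply (ω : ℤ → Module.Dual (ZMod 2) (ZMod 2)) (n : ℤ) :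
    τ ω n = if n < 0 then ω n else ω n + ω (n + 1) := by
  have hM : (-({-1, 0} : Finset ℤ)) = {0, 1} := by decide
  rw [hM, nucaMapZ, Finset.sum_insert (by decide), Finset.sum_singleton]
  by_cases h : n < 0
  · simp [dualCoeffZ, sEx, h, show n ≤ 0 by omega, show n + 1 ≤ 0 by omega,
      LinearMap.dualMap_apply']
  · by_cases h0 : n ≤ 0 <;> simp [dualCoeffZ, sEx, h, h0, show ¬n + 1 ≤ 0 by omega]

theorem runningSum_leftInverse_nucaMapZ_sEx : Function.LeftInverse runningSum σ := by
  intro x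
  funext n
  rcases lt_or_ge n 0 with hn | hn
  · rw [runningSum_of_nonpos _ hn.le, nucaMapZ_sEx_apply, if_pos hn.le]
  · induction n, hn using Int.leInduction with
    | base => rw [runningSum_of_nonpos _ le_rfl, nucaMapZ_sEx_apply, if_pos le_rfl]
    | succ m hm ih =>
      rw [runningSum_add_one _ hm, ih, nucaMapZ_sEx_apply, if_neg (by omega),
        add_sub_cancel_right, ← add_assoc, ZModModule.add_self, zero_add]

theorem nucaMapZ_sEx_rightInverse_runningSum : Function.RightInverse runningSum σ := by
  intro y
  funext n
  rw [nucaMapZ_sEx_apply]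
  split_ifs with hn
  · exact runningSum_of_nonpos y hn
  · obtain ⟨m, rfl⟩ : ∃ m, n = m + 1 := ⟨n - 1, by ring⟩
    rw [add_sub_cancel_right, runningSum_add_one y (by omega), ← add_assoc, ZModModule.add_self,
      zero_add]

theorem bijective_nucaMapZ_sEx : Function.Bijective σ :=
  Function.bijective_iff_has_inverse.2
    ⟨runningSum, runningSum_leftInverse_nucaMapZ_sEx, nucaMapZ_sEx_rightInverse_runningSum⟩

theorem not_postSurjective_nucaMapZ_sEx : ¬ PostSurjective σ := by
  intro h
  have hδ : Asymptotic (Pi.single 1 1 : ℤ → ZMod 2) 0 :=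
    (Set.finite_singleton 1).subset Pi.support_single_subset
  rw [← coe_nucaAddMonoidHom, postSurjective_iff] at h
  obtain ⟨z, hz, hσz⟩ := h _ hδ
  have hz_eq : z = runningSum (Pi.single 1 1) := by
    rw [← hσz]
    exact (runningSum_leftInverse_nucaMapZ_sEx z).symm
  have hz_one : ∀ n ≥ 1, z n = 1 := fun n hn => by
    rw [hz_eq, runningSum, if_neg (by omega), Finset.sum_pi_single', if_pos (by simp; omega)]
  obtain ⟨n, hn0, hn1⟩ := (hz.eventually_atTop.and (eventually_ge_atTop 1)).exists
  exact absurd (hn0.symm.trans (hz_one n hn1)) (by decide)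

theorem nucaMapZ_dualCoeffZ_sEx_eq_zero_iff (ω : ℤ → Module.Dual (ZMod 2) (ZMod 2)) :
    τ ω = 0 ↔ (∀ n < 0, ω n = 0) ∧ ∀ n ≥ 0, ω n = ω 0 := by
  simp only [funext_iff, nucaMapZ_dualCoeffZ_sEx_apply, Pi.zero_apply]
  constructor
  · intro h
    refine ⟨fun n hn => by simpa [hn] using h n, fun n hn => ?_⟩
    induction n, hn using Int.leInduction with
    | base => rfl
    | succ m hm ih =>
      have hm' := h m
      rw [if_neg (by omega), add_eq_zero_iff_eq_neg, ZModModule.neg_eq_self] at hm'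
      rw [← hm', ih]
  · rintro ⟨hneg, hnonneg⟩ n
    split_ifs with hn
    · exact hneg n hn
    · rw [hnonneg n (by omega), hnonneg (n + 1) (by omega), ZModModule.add_self]

theorem preInjective_nucaMapZ_dualCoeffZ_sEx : PreInjective τ := by
  rw [← coe_nucaAddMonoidHom, preInjective_iff]
  intro ω hω hτω
  obtain ⟨hneg, hnonneg⟩ := (nucaMapZ_dualCoeffZ_sEx_eq_zero_iff ω).1 hτω
  obtain ⟨n, hn0, hn⟩ := (hω.eventually_atTop.and (eventually_ge_atTop 0)).exists
  funext m
  rcases lt_or_ge m 0 with hm | hm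
  · exact hneg m hm
  · rw [hnonneg m hm, ← hnonneg n hn, hn0, Pi.zero_apply]

theorem not_injective_nucaMapZ_dualCoeffZ_sEx : ¬ Function.Injective τ := by
  intro h
  obtain ⟨φ, hφ⟩ := exists_ne (0 : Module.Dual (ZMod 2) (ZMod 2))
  let ω : ℤ → Module.Dual (ZMod 2) (ZMod 2) := fun n => if 0 ≤ n then φ else 0
  have hτω : τ ω = τ 0 := by
    rw [← coe_nucaAddMonoidHom, map_zero, coe_nucaAddMonoidHom,
      nucaMapZ_dualCoeffZ_sEx_eq_zero_iff]
    refine ⟨fun n hn => if_neg (by omega), fun n hn => ?_⟩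
    simp only [ω, if_pos hn, if_pos le_rfl]
  exact hφ (by simpa [ω] using congr_fun (h hτω) 0)

theorem postSurjective_nucaMapZ_dualCoeffZ_sEx : PostSurjective τ := by
  rw [← coe_nucaAddMonoidHom, postSurjective_iff]
  intro d hd
  obtain ⟨N, hN⟩ := eventually_atTop.1 hd.eventually_atTop
  let e : ℤ → Module.Dual (ZMod 2) (ZMod 2) := fun n =>
    if n < 0 then d n else ∑ k ∈ Finset.Ico n N, d k
  have he_fin : Asymptotic e 0 := by
    refine (hd.union (Set.finite_Ico 0 N)).subset fun n hn => ?_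
    simp only [Set.mem_ofPred_eq, Pi.zero_apply, e] at hn
    split_ifs at hn with hn0
    · exact Or.inl hn
    · refine Or.inr ⟨by omega, lt_of_not_ge fun hNn => hn ?_⟩
      rw [Finset.Ico_eq_empty_of_le hNn, Finset.sum_empty]
  refine ⟨e, he_fin, funext fun n => ?_⟩
  change τ e n = d n
  rw [nucaMapZ_dualCoeffZ_sEx_apply]
  split_ifs with hn
  · simp only [e, if_pos hn]
  · simp only [e, if_neg hn, if_neg (show ¬n + 1 < 0 by omega)]
    rcases lt_or_ge n N with hnN | hNn
    · rw [← Finset.insert_Ico_add_one_left_eq_Ico hnN, Finset.sum_insert (by simp), add_assoc,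
        ZModModule.add_self, add_zero]
    · rw [Finset.Ico_eq_empty_of_le hNn, Finset.Ico_eq_empty_of_le (by omega), hN n hNn,
        Finset.sum_empty, add_zero]

/-- For `A = ℤ/2ℤ`, `G = ℤ`, `M = {-1,0}` and the above `s` (so `σ_s(x)(n) = x(n)`
for `n ≤ 0` and `σ_s(x)(n) = x(n-1) + x(n)` for `n ≥ 1`): (a) `σ_s` is bijective but
not post-surjective; (b) the dual NUCA `σ_{s*}` (with memory `-M = {0,1}`) is
pre-injective and post-surjective but not injective. -/
theorem stmt18 :
    (Function.Bijective (nucaMapZ ({-1, 0} : Finset ℤ) sEx) ∧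
      ¬ PostSurjective (nucaMapZ ({-1, 0} : Finset ℤ) sEx)) ∧
    (PreInjective (nucaMapZ (-({-1, 0} : Finset ℤ)) (dualCoeffZ sEx)) ∧
      PostSurjective (nucaMapZ (-({-1, 0} : Finset ℤ)) (dualCoeffZ sEx)) ∧
      ¬ Function.Injective (nucaMapZ (-({-1, 0} : Finset ℤ)) (dualCoeffZ sEx))) :=
  ⟨⟨bijective_nucaMapZ_sEx, not_postSurjective_nucaMapZ_sEx⟩,
    preInjective_nucaMapZ_dualCoeffZ_sEx, postSurjective_nucaMapZ_dualCoeffZ_sEx,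
    not_injective_nucaMapZ_dualCoeffZ_sEx⟩
end
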